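/- (A grouplike element induces an entwined module structure on A; the nontrivial direction of the grouplike/comodule correspondence, specialized to the coring of an entwining structure.) Let (A,C)_ψ be an entwining structure and let g = Σ_j a_j ⊗ c_j ∈ A ⊗ C be a grouplike element, i.e. (A ⊗ ε)(g) = 1 and (A ⊗ Δ)(g) = Σ_j act(g ⊗ a_j) ⊗ c_j. Then the k-linear map ρ_A : A → A ⊗ C defined by ρ_A(a) := act(g ⊗ a) makes A an entwined (A,C)_ψ-module, i.e.: (1) (A ⊗ ε) ∘ ρ_A = id_A; (2) (ρ_A ⊗ C) ∘ ρ_A = (A ⊗ Δ) ∘ ρ_A; (3) ρ_A(ab) = act(ρ_A(a) ⊗ b) for all a, b ∈ A. -/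
import Mathlib


/-!
STATEMENT 13: A grouplike element g ∈ A ⊗ C of the coring associated to an
entwining structure (A,C)_ψ induces an entwined module structure on A via
ρ_A(a) = act(g ⊗ a).
-/

open TensorProduct

noncomputable section

variable {k A C : Type*} [CommRing k] [Ring A] [Algebra k A]
  [AddCommGroup C] [Module k C] [Coalgebra k C]

/-- The twisted right action `act((a' ⊗ c) ⊗ a) = (μ ⊗ C)(a' ⊗ ψ(c ⊗ a))`. -/
def act (ψ : C ⊗[k] A →ₗ[k] A ⊗[k] C) :
    (A ⊗[k] C) ⊗[k] A →ₗ[k] A ⊗[k] C :=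
  LinearMap.rTensor C (LinearMap.mul' k A) ∘ₗ
    (TensorProduct.assoc k A A C).symm.toLinearMap ∘ₗ
    LinearMap.lTensor A ψ ∘ₗ
    (TensorProduct.assoc k A C A).toLinearMap

/-- `(A ⊗ ε) : A ⊗ C → A` (composed with the canonical iso `A ⊗ k ≅ A`). -/
def epsA : A ⊗[k] C →ₗ[k] A :=
  (TensorProduct.rid k A).toLinearMap ∘ₗ
    LinearMap.lTensor A (Coalgebra.counit (R := k) (A := C))

/-- The coaction `ρ_A : A → A ⊗ C`, `a ↦ act(g ⊗ a)`. -/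
def rhoA (ψ : C ⊗[k] A →ₗ[k] A ⊗[k] C) (g : A ⊗[k] C) :
    A →ₗ[k] A ⊗[k] C :=
  act ψ ∘ₗ TensorProduct.mk k (A ⊗[k] C) A g


/-! ### Auxiliary lemmas -/

section Aux

variable (ψ : C ⊗[k] A →ₗ[k] A ⊗[k] C)

lemma mulA (a' : A) (y : A ⊗[k] C) :
    LinearMap.rTensor C (LinearMap.mul' k A)
      ((TensorProduct.assoc k A A C).symm (a' ⊗ₜ y)) =
    LinearMap.rTensor C (LinearMap.mulLeft k a') y := by
  induction y using TensorProduct.induction_on with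
  | zero => simp
  | tmul u d => simp [LinearMap.mul'_apply]
  | add u v hu hv => simp [tmul_add, map_add, hu, hv]

lemma act_tmul (a' : A) (c : C) (a : A) :
    act ψ ((a' ⊗ₜ c) ⊗ₜ a) = LinearMap.rTensor C (LinearMap.mulLeft k a') (ψ (c ⊗ₜ a)) := by
  simp [act, mulA]

lemma act_rT (a' : A) (y : A ⊗[k] C) (b : A) :
    act ψ ((LinearMap.rTensor C (LinearMap.mulLeft k a') y) ⊗ₜ b) =
    LinearMap.rTensor C (LinearMap.mulLeft k a') (act ψ (y ⊗ₜ b)) := by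
  induction y using TensorProduct.induction_on with
  | zero => simp
  | tmul u d =>
      simp only [LinearMap.rTensor_tmul, LinearMap.mulLeft_apply, act_tmul]
      rw [LinearMap.mulLeft_mul, LinearMap.rTensor_comp, LinearMap.comp_apply]
  | add u v hu hv => simp only [map_add, add_tmul, hu, hv]

lemma epsA_tmul (a : A) (c : C) :
    epsA (a ⊗ₜ[k] c) = Coalgebra.counit (R := k) c • a := by
  simp [epsA]

lemma epsA_rT (a' : A) (y : A ⊗[k] C) :
    epsA (LinearMap.rTensor C (LinearMap.mulLeft k a') y) = a' * epsA y := by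
  induction y using TensorProduct.induction_on with
  | zero => simp
  | tmul u d => simp [epsA_tmul, mul_smul_comm]
  | add u v hu hv => simp [map_add, hu, hv, mul_add]

lemma eps_act
    (hcounit : ∀ (c : C) (a : A),
      epsA (ψ (c ⊗ₜ a)) = Coalgebra.counit (R := k) c • a)
    (x : A ⊗[k] C) (a : A) :
    epsA (act ψ (x ⊗ₜ a)) = epsA x * a := by
  induction x using TensorProduct.induction_on with
  | zero => simp
  | tmul a' c =>
      rw [act_tmul, epsA_rT, hcounit, epsA_tmul, mul_smul_comm, smul_mul_assoc]
  | add u v hu hv => simp only [add_tmul, map_add, hu, hv, add_mul]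

lemma mul_act
    (hmul : ∀ (c : C) (a b : A), ψ (c ⊗ₜ (a * b)) = act ψ (ψ (c ⊗ₜ a) ⊗ₜ b))
    (x : A ⊗[k] C) (a b : A) :
    act ψ (x ⊗ₜ (a * b)) = act ψ (act ψ (x ⊗ₜ a) ⊗ₜ b) := by
  induction x using TensorProduct.induction_on with
  | zero => simp
  | tmul a' c => rw [act_tmul, act_tmul, hmul, act_rT]
  | add u v hu hv => simp only [add_tmul, map_add, hu, hv]

/-- The induced right action on `A ⊗ (C ⊗ C)`. -/
def act2 (ψ : C ⊗[k] A →ₗ[k] A ⊗[k] C) :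
    (A ⊗[k] (C ⊗[k] C)) ⊗[k] A →ₗ[k] A ⊗[k] (C ⊗[k] C) :=
  (TensorProduct.assoc k A C C).toLinearMap ∘ₗ
    LinearMap.rTensor C (act ψ) ∘ₗ
    (TensorProduct.assoc k (A ⊗[k] C) A C).symm.toLinearMap ∘ₗ
    LinearMap.lTensor (A ⊗[k] C) ψ ∘ₗ
    (TensorProduct.assoc k (A ⊗[k] C) C A).toLinearMap ∘ₗ
    LinearMap.rTensor A (TensorProduct.assoc k A C C).symm.toLinearMap

lemma act2_tmul (a' : A) (c c' : C) (a : A) :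
    act2 ψ ((a' ⊗ₜ (c ⊗ₜ c')) ⊗ₜ a) =
    (TensorProduct.assoc k A C C)
      (LinearMap.rTensor C (act ψ)
        ((TensorProduct.assoc k (A ⊗[k] C) A C).symm ((a' ⊗ₜ c) ⊗ₜ ψ (c' ⊗ₜ a)))) := by
  simp [act2]

end Aux

section Aux2

variable (ψ : C ⊗[k] A →ₗ[k] A ⊗[k] C)

lemma rhoA_apply (g : A ⊗[k] C) (a : A) : rhoA ψ g a = act ψ (g ⊗ₜ a) := rfl

lemma rhoA_zero : rhoA ψ (0 : A ⊗[k] C) = 0 := by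
  ext b; simp [rhoA_apply, zero_tmul]

lemma rhoA_add (y y' : A ⊗[k] C) : rhoA ψ (y + y') = rhoA ψ y + rhoA ψ y' := by
  ext b; simp [rhoA_apply, add_tmul]

lemma lemW (a' a : A) (w : C ⊗[k] C) :
    LinearMap.rTensor (C ⊗[k] C) (LinearMap.mulLeft k a')
      ((TensorProduct.assoc k A C C)
        (LinearMap.rTensor C ψ
          ((TensorProduct.assoc k C A C).symm
            (LinearMap.lTensor C ψ
              ((TensorProduct.assoc k C C A) (w ⊗ₜ a)))))) =
    act2 ψ ((a' ⊗ₜ w) ⊗ₜ a) := by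
  induction w using TensorProduct.induction_on with
  | zero => simp [zero_tmul]
  | tmul c c' =>
      rw [act2_tmul]
      simp only [assoc_tmul, LinearMap.lTensor_tmul]
      generalize ψ (c' ⊗ₜ[k] a) = z
      induction z using TensorProduct.induction_on with
      | zero => simp [tmul_zero]
      | tmul aψ cψ =>
          simp only [assoc_symm_tmul, LinearMap.rTensor_tmul, act_tmul]
          generalize ψ (c ⊗ₜ[k] aψ) = t
          induction t using TensorProduct.induction_on with
          | zero => simp [zero_tmul]
          | tmul u d => simp
          | add u v hu hv => simp only [map_add, add_tmul, hu, hv]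
      | add u v hu hv => simp only [tmul_add, map_add, hu, hv]
  | add u v hu hv => simp only [add_tmul, tmul_add, map_add, hu, hv]

lemma comul_act
    (hcomul : LinearMap.lTensor A (Coalgebra.comul (R := k) (A := C)) ∘ₗ ψ =
      (TensorProduct.assoc k A C C).toLinearMap ∘ₗ
        LinearMap.rTensor C ψ ∘ₗ
        (TensorProduct.assoc k C A C).symm.toLinearMap ∘ₗ
        LinearMap.lTensor C ψ ∘ₗ
        (TensorProduct.assoc k C C A).toLinearMap ∘ₗ
        LinearMap.rTensor A (Coalgebra.comul (R := k) (A := C)))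
    (x : A ⊗[k] C) (a : A) :
    LinearMap.lTensor A (Coalgebra.comul (R := k) (A := C)) (act ψ (x ⊗ₜ a)) =
    act2 ψ ((LinearMap.lTensor A (Coalgebra.comul (R := k) (A := C)) x) ⊗ₜ a) := by
  induction x using TensorProduct.induction_on with
  | zero => simp [zero_tmul]
  | tmul a' c =>
      have h2 := LinearMap.congr_fun hcomul (c ⊗ₜ[k] a)
      simp only [LinearMap.comp_apply, LinearEquiv.coe_coe,
        LinearMap.rTensor_tmul] at h2
      rw [act_tmul, ← LinearMap.comp_apply, LinearMap.lTensor_comp_rTensor,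
        ← LinearMap.rTensor_comp_lTensor, LinearMap.comp_apply, h2,
        LinearMap.lTensor_tmul, lemW]
  | add u v hu hv => simp only [add_tmul, map_add, hu, hv]

lemma lemY (y : A ⊗[k] C) (c : C) (a : A) :
    act2 ψ (((TensorProduct.assoc k A C C) (y ⊗ₜ c)) ⊗ₜ a) =
    (TensorProduct.assoc k A C C)
      (LinearMap.rTensor C (rhoA ψ y) (ψ (c ⊗ₜ a))) := by
  induction y using TensorProduct.induction_on with
  | zero =>
      simp only [zero_tmul, map_zero, rhoA_zero, LinearMap.rTensor_zero,
        LinearMap.zero_apply]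
  | tmul u d =>
      rw [assoc_tmul, act2_tmul]
      generalize ψ (c ⊗ₜ[k] a) = z
      induction z using TensorProduct.induction_on with
      | zero => simp [tmul_zero]
      | tmul aψ cψ =>
          simp only [assoc_symm_tmul, LinearMap.rTensor_tmul, rhoA_apply]
      | add u' v' hu hv => simp only [tmul_add, map_add, hu, hv]
  | add u v hu hv =>
      simp only [add_tmul, map_add, rhoA_add, LinearMap.rTensor_add,
        LinearMap.add_apply, hu, hv]

lemma rho_act
    (hmul : ∀ (c : C) (a b : A), ψ (c ⊗ₜ (a * b)) = act ψ (ψ (c ⊗ₜ a) ⊗ₜ b))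
    (g : A ⊗[k] C) (x : A ⊗[k] C) (a : A) :
    (TensorProduct.assoc k A C C)
      (LinearMap.rTensor C (rhoA ψ g) (act ψ (x ⊗ₜ a))) =
    act2 ψ (((TensorProduct.assoc k A C C)
      (LinearMap.rTensor C (rhoA ψ g) x)) ⊗ₜ a) := by
  induction x using TensorProduct.induction_on with
  | zero => simp [zero_tmul]
  | tmul a' c =>
      have hcomp : rhoA ψ g ∘ₗ LinearMap.mulLeft k a' = rhoA ψ (rhoA ψ g a') := by
        ext b
        simp only [LinearMap.comp_apply, LinearMap.mulLeft_apply, rhoA_apply]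
        exact mul_act ψ hmul g a' b
      rw [act_tmul, ← LinearMap.comp_apply, ← LinearMap.rTensor_comp, hcomp,
        LinearMap.rTensor_tmul, lemY]
  | add u v hu hv => simp only [add_tmul, map_add, hu, hv]

end Aux2
theorem statement13 (ψ : C ⊗[k] A →ₗ[k] A ⊗[k] C)
    -- (i) ψ ∘ (C ⊗ μ) = (μ ⊗ C) ∘ (A ⊗ ψ) ∘ (ψ ⊗ A)
    (hmul : ∀ (c : C) (a b : A), ψ (c ⊗ₜ (a * b)) = act ψ (ψ (c ⊗ₜ a) ⊗ₜ b))
    -- (ii) (A ⊗ Δ) ∘ ψ = (ψ ⊗ C) ∘ (C ⊗ ψ) ∘ (Δ ⊗ A)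
    (hcomul : LinearMap.lTensor A (Coalgebra.comul (R := k) (A := C)) ∘ₗ ψ =
      (TensorProduct.assoc k A C C).toLinearMap ∘ₗ
        LinearMap.rTensor C ψ ∘ₗ
        (TensorProduct.assoc k C A C).symm.toLinearMap ∘ₗ
        LinearMap.lTensor C ψ ∘ₗ
        (TensorProduct.assoc k C C A).toLinearMap ∘ₗ
        LinearMap.rTensor A (Coalgebra.comul (R := k) (A := C)))
    -- (iii) ψ(c ⊗ 1) = 1 ⊗ c
    (hone : ∀ c : C, ψ (c ⊗ₜ (1 : A)) = (1 : A) ⊗ₜ c)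
    -- (iv) (A ⊗ ε)(ψ(c ⊗ a)) = ε(c)a
    (hcounit : ∀ (c : C) (a : A),
      epsA (ψ (c ⊗ₜ a)) = Coalgebra.counit (R := k) c • a)
    -- g is a grouplike element:
    (g : A ⊗[k] C)
    -- (A ⊗ ε)(g) = 1
    (hgcounit : epsA g = 1)
    -- (A ⊗ Δ)(g) = Σ_j act(g ⊗ a_j) ⊗ c_j  (where g = Σ_j a_j ⊗ c_j)
    (hgcomul : LinearMap.lTensor A (Coalgebra.comul (R := k) (A := C)) g =
      (TensorProduct.assoc k A C C)
        (LinearMap.rTensor C (rhoA ψ g) g)) :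
    -- (1) (A ⊗ ε) ∘ ρ_A = id
    (∀ a : A, epsA (rhoA ψ g a) = a) ∧
    -- (2) (ρ_A ⊗ C) ∘ ρ_A = (A ⊗ Δ) ∘ ρ_A
    (∀ a : A,
      (TensorProduct.assoc k A C C)
          (LinearMap.rTensor C (rhoA ψ g) (rhoA ψ g a)) =
        LinearMap.lTensor A (Coalgebra.comul (R := k) (A := C))
          (rhoA ψ g a)) ∧
    -- (3) ρ_A(ab) = act(ρ_A(a) ⊗ b)
    (∀ a b : A, rhoA ψ g (a * b) = act ψ (rhoA ψ g a ⊗ₜ b)) := by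
  refine ⟨?_, ?_, ?_⟩
  · intro a
    rw [rhoA_apply, eps_act ψ hcounit, hgcounit, one_mul]
  · intro a
    rw [rhoA_apply, rho_act ψ hmul g g a, ← hgcomul,
      comul_act ψ hcomul g a]
  · intro a b
    rw [rhoA_apply, rhoA_apply, mul_act ψ hmul]
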